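/- Let H be a complex Hilbert space, regarded as a JB*-triple with triple product {x,y,z} := (1/2)(⟨x,y⟩z + ⟨z,y⟩x), where ⟨·,·⟩ denotes the inner product (linear in the first variable, conjugate linear in the second). Then every weak-local triple derivation on H is a triple derivation. -/

import Mathlib

variable {H : Type*} [NormedAddCommGroup H] [InnerProductSpace ℂ H] [CompleteSpace H]

/-- The JB*-triple product on a complex Hilbert space,
`{x,y,z} = (1/2)(⟨x,y⟩ z + ⟨z,y⟩ x)`, where `⟨·,·⟩` is linear in the first variable
and conjugate linear in the second (so `⟨x,y⟩ = inner y x` in Mathlib's convention). -/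
noncomputable def htp (x y z : H) : H :=
  (2⁻¹ : ℂ) • ((inner ℂ y x : ℂ) • z + (inner ℂ y z : ℂ) • x)

/-- A triple derivation on the Hilbert space `H`. -/
def IsHilbertTripleDerivation (δ : H → H) : Prop :=
  IsLinearMap ℂ δ ∧
    ∀ x y z : H, δ (htp x y z) = htp (δ x) y z + htp x (δ y) z + htp x y (δ z)

/-- A weak-local triple derivation on the Hilbert space `H`. -/
def IsHilbertWeakLocalTripleDerivation (T : H → H) : Prop :=
  IsLinearMap ℂ T ∧
    ∀ (φ : H →L[ℂ] ℂ) (a : H),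
      ∃ δ : H → H, IsHilbertTripleDerivation δ ∧ φ (T a) = φ (δ a)

/-!
A linear map on a Hilbert space is a triple derivation exactly when it is skew-adjoint,
`⟪δ x, y⟫ + ⟪x, δ y⟫ = 0`. For a weak-local triple derivation `T`, testing against the
functional `⟪a, ·⟫` shows that `⟪T a, a⟫` agrees with `⟪δ a, a⟫` for a skew-adjoint `δ`,
hence is purely imaginary. By complex polarization, a linear map whose quadratic form is
purely imaginary is skew-adjoint (it is `-i` times a symmetric map), so `T` is a triple
derivation.
-/

open scoped InnerProductSpace ComplexConjugate

section

variable {E : Type*} [NormedAddCommGroup E] [InnerProductSpace ℂ E]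

theorem LinearMap.inner_map_add_inner_map_eq_zero_of_re_inner_map_self_eq_zero
    (T : E →ₗ[ℂ] E) (hT : ∀ v, (⟪T v, v⟫_ℂ).re = 0) (x y : E) :
    ⟪T x, y⟫_ℂ + ⟪x, T y⟫_ℂ = 0 := by
  have hsymm : (Complex.I • T).IsSymmetric := by
    refine (LinearMap.isSymmetric_iff_inner_map_self_real _).mpr fun v => ?_
    have hv : conj ⟪T v, v⟫_ℂ = -⟪T v, v⟫_ℂ :=
      Complex.ext (by rw [Complex.conj_re, Complex.neg_re, hT v, neg_zero])
        (by rw [Complex.conj_im, Complex.neg_im])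
    rw [LinearMap.smul_apply, inner_smul_left, map_mul, hv, Complex.conj_conj, Complex.conj_I]
    ring
  have h := hsymm x y
  simp only [LinearMap.smul_apply, inner_smul_left, inner_smul_right, Complex.conj_I] at h
  linear_combination Complex.I * h + (⟪T x, y⟫_ℂ + ⟪x, T y⟫_ℂ) * Complex.I_sq

theorem isHilbertTripleDerivation_iff {δ : E → E} :
    IsHilbertTripleDerivation δ ↔ IsLinearMap ℂ δ ∧ ∀ x y, ⟪δ x, y⟫_ℂ + ⟪x, δ y⟫_ℂ = 0 := by
  refine ⟨fun hδ => ⟨hδ.1, fun x y => ?_⟩, fun ⟨hlin, hskew⟩ => ⟨hlin, fun x y z => ?_⟩⟩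
  · rcases eq_or_ne y 0 with rfl | hy
    · simp [hδ.1.map_zero]
    -- apply the derivation identity to `{y, x, y} = ⟪x, y⟫ • y`
    have key : (⟪δ x, y⟫_ℂ + ⟪x, δ y⟫_ℂ) • y =
        htp (δ y) x y + htp y (δ x) y + htp y x (δ y) - δ (htp y x y) := by
      simp only [htp, hδ.1.map_add, hδ.1.map_smul]
      module
    rw [← hδ.2, sub_self] at key
    exact (smul_eq_zero.mp key).resolve_right hy
  · have hx : ⟪δ y, x⟫_ℂ = -⟪y, δ x⟫_ℂ := eq_neg_of_add_eq_zero_left (hskew y x)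
    have hz : ⟪δ y, z⟫_ℂ = -⟪y, δ z⟫_ℂ := eq_neg_of_add_eq_zero_left (hskew y z)
    simp only [htp, hlin.map_add, hlin.map_smul, hx, hz]
    module

theorem re_inner_map_self_eq_zero_of_skew {δ : E → E}
    (hskew : ∀ x y, ⟪δ x, y⟫_ℂ + ⟪x, δ y⟫_ℂ = 0) (a : E) : (⟪δ a, a⟫_ℂ).re = 0 := by
  have h := hskew a a
  rw [← inner_conj_symm a (δ a), Complex.add_conj, Complex.ofReal_eq_zero] at h
  simpa using h

end

/-- Every weak-local triple derivation on a complex Hilbert space is a triple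
derivation. -/
theorem stmt19 (T : H → H) (hT : IsHilbertWeakLocalTripleDerivation T) :
    IsHilbertTripleDerivation T := by
  have hquad : ∀ a, (⟪T a, a⟫_ℂ).re = 0 := fun a => by
    obtain ⟨δ, hδ, hφ⟩ := hT.2 (innerSL ℂ a) a
    simp only [innerSL_apply_apply] at hφ
    rw [← inner_conj_symm, Complex.conj_re, hφ, ← Complex.conj_re, inner_conj_symm]
    exact re_inner_map_self_eq_zero_of_skew (isHilbertTripleDerivation_iff.mp hδ).2 a
  exact isHilbertTripleDerivation_iff.mpr ⟨hT.1,
    (hT.1.mk' T).inner_map_add_inner_map_eq_zero_of_re_inner_map_self_eq_zero hquad⟩
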